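/- arXiv:1103.6101 — 4 statements merged into one kernel-verified Lean document; each statement's English description precedes it below -/
import Mathlib

section
/- Let 0 < a ≤ b and let E := {ξ ∈ ℝ^{2×2} : λ₁(ξ) = a, λ₂(ξ) = b}. Then E^{pc} = E^{rc} = { ξ ∈ ℝ^{2×2} : λ₁(ξ)·λ₂(ξ) ≤ ab and λ₂(ξ) ≤ b }. -/
open scoped BigOperators

/-- Square of the Frobenius norm of a 2×2 real matrix. -/
noncomputable def frobSq (ξ : Matrix (Fin 2) (Fin 2) ℝ) : ℝ := ∑ i, ∑ j, (ξ i j) ^ 2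

/-- The Frobenius norm of a 2×2 real matrix. -/
noncomputable def frobNorm (ξ : Matrix (Fin 2) (Fin 2) ℝ) : ℝ := Real.sqrt (frobSq ξ)

/-- The smallest singular value of a 2×2 real matrix. -/
noncomputable def lam1 (ξ : Matrix (Fin 2) (Fin 2) ℝ) : ℝ :=
  (Real.sqrt (frobSq ξ + 2 * |ξ.det|) - Real.sqrt (frobSq ξ - 2 * |ξ.det|)) / 2

/-- The largest singular value of a 2×2 real matrix. -/
noncomputable def lam2 (ξ : Matrix (Fin 2) (Fin 2) ℝ) : ℝ :=
  (Real.sqrt (frobSq ξ + 2 * |ξ.det|) + Real.sqrt (frobSq ξ - 2 * |ξ.det|)) / 2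

/-- A function on 2×2 matrices is rank one convex if it is convex along rank one segments. -/
def RankOneConvex (f : Matrix (Fin 2) (Fin 2) ℝ → ℝ) : Prop :=
  ∀ (ξ η : Matrix (Fin 2) (Fin 2) ℝ) (t : ℝ), t ∈ Set.Icc (0 : ℝ) 1 →
    (ξ - η).rank = 1 → f (t • ξ + (1 - t) • η) ≤ t * f ξ + (1 - t) * f η

/-- The rank one convex hull `E^{rc}` of a set of 2×2 matrices. -/
def rcHull (E : Set (Matrix (Fin 2) (Fin 2) ℝ)) : Set (Matrix (Fin 2) (Fin 2) ℝ) :=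
  {ξ | ∀ f : Matrix (Fin 2) (Fin 2) ℝ → ℝ,
    RankOneConvex f → (∀ η ∈ E, f η ≤ 0) → f ξ ≤ 0}

/-- The rank one convex hull `U^{rc}` of an open set of 2×2 matrices. -/
def rcHullOpen (U : Set (Matrix (Fin 2) (Fin 2) ℝ)) : Set (Matrix (Fin 2) (Fin 2) ℝ) :=
  {ξ | ∃ E : Set (Matrix (Fin 2) (Fin 2) ℝ), E ⊆ U ∧ IsCompact E ∧ ξ ∈ rcHull E}

/-- A function on 2×2 matrices is polyconvex if it is a convex function of (ξ, det ξ). -/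
def PolyconvexFun (f : Matrix (Fin 2) (Fin 2) ℝ → ℝ) : Prop :=
  ∃ g : Matrix (Fin 2) (Fin 2) ℝ × ℝ → ℝ,
    ConvexOn ℝ Set.univ g ∧ ∀ ξ, f ξ = g (ξ, ξ.det)

/-- The polyconvex hull `E^{pc}` of a set of 2×2 matrices. -/
def pcHull (E : Set (Matrix (Fin 2) (Fin 2) ℝ)) : Set (Matrix (Fin 2) (Fin 2) ℝ) :=
  {ξ | ∀ f : Matrix (Fin 2) (Fin 2) ℝ → ℝ,
    PolyconvexFun f → (∀ η ∈ E, f η ≤ 0) → f ξ ≤ 0}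

/-- The polyconvex hull `U^{pc}` of an open set of 2×2 matrices. -/
def pcHullOpen (U : Set (Matrix (Fin 2) (Fin 2) ℝ)) : Set (Matrix (Fin 2) (Fin 2) ℝ) :=
  {ξ | ∃ E : Set (Matrix (Fin 2) (Fin 2) ℝ), E ⊆ U ∧ IsCompact E ∧ ξ ∈ pcHull E}

/-- A set of 2×2 matrices is polyconvex. -/
def PolyconvexSet (A : Set (Matrix (Fin 2) (Fin 2) ℝ)) : Prop :=
  ∀ (ξ : Fin 5 → Matrix (Fin 2) (Fin 2) ℝ) (t : Fin 5 → ℝ),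
    (∀ i, ξ i ∈ A) → (∀ i, 0 ≤ t i) → (∑ i, t i) = 1 →
    (∑ i, t i * (ξ i).det) = (∑ i, t i • ξ i).det →
    (∑ i, t i • ξ i) ∈ A

/-- The polyconvex hull `Pco E`: the smallest polyconvex set containing `E`. -/
def Pco (E : Set (Matrix (Fin 2) (Fin 2) ℝ)) : Set (Matrix (Fin 2) (Fin 2) ℝ) :=
  ⋂₀ {A | PolyconvexSet A ∧ E ⊆ A}

/-- A set of 2×2 matrices is isotropic if it is invariant under orthogonal transformations. -/
def Isotropic (E : Set (Matrix (Fin 2) (Fin 2) ℝ)) : Prop :=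
  ∀ R S : Matrix (Fin 2) (Fin 2) ℝ, R * R.transpose = 1 → S * S.transpose = 1 → ∀ ξ ∈ E, R * ξ * S ∈ E

/-- The distance (w.r.t. the Frobenius norm) from a matrix to a set of matrices. -/
noncomputable def distE (ξ : Matrix (Fin 2) (Fin 2) ℝ) (E : Set (Matrix (Fin 2) (Fin 2) ℝ)) : ℝ :=
  sInf ((fun η => frobNorm (ξ - η)) '' E)

/-- The function `f_θ(x,y) = xy + θ(y-x)`. -/
def ftheta (θ : ℝ) (p : ℝ × ℝ) : ℝ := p.1 * p.2 + θ * (p.2 - p.1)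

/-- The gradient of a map `u : ℝ² → ℝ²` at `x`, as a 2×2 matrix. -/
noncomputable def gradMatrix (u : (Fin 2 → ℝ) → (Fin 2 → ℝ)) (x : Fin 2 → ℝ) :
    Matrix (Fin 2) (Fin 2) ℝ :=
  LinearMap.toMatrix' (fderiv ℝ u x).toLinearMap

/-!
Identify `ℝ²` with `ℂ` and write `ξ v = z v + w v̄`. Then `det ξ = ‖z‖² - ‖w‖²` and the singular
values of `ξ` are `|‖z‖ - ‖w‖|` and `‖z‖ + ‖w‖`, so `λ₂` and `|det| = λ₁λ₂` are convex functions of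
`(ξ, det ξ)`: this bounds `E^{pc}`, and `E^{rc} ⊆ E^{pc}` holds for every set because the
determinant is affine along rank one lines. Conversely, multiplying by rotations (which preserves
`E` and rank one convexity) reduces to a diagonal `ξ = diag(x, y)`. A rank one convex `f ≤ 0` on
`E` is `≤ 0` at `diag(c, d)` with `|cd| = ab`, `c² + d² ≤ a² + b²`, as the midpoint of the shears
`[[c, ±t], [0, d]] ∈ E`; from this hyperbola, splitting `y` reaches every `diag(x, y)` with
`a ≤ |x|`, symmetrically for `a ≤ |y|`, and splitting `x` between `±a` reaches the rest.
-/

local notation "M₂" => Matrix (Fin 2) (Fin 2) ℝ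

theorem Matrix.rank_eq_one_of_det_eq_zero {K : Type*} [Field K] {A : Matrix (Fin 2) (Fin 2) K}
    (hA : A ≠ 0) (hdet : A.det = 0) : A.rank = 1 := by
  have hle : A.rank ≤ 1 := by
    obtain ⟨v, hv, hAv⟩ := Matrix.exists_mulVec_eq_zero_iff.mpr hdet
    have hker : A.mulVecLin.ker ≠ ⊥ := fun h =>
      hv (by simpa [h] using (LinearMap.mem_ker.mpr hAv : v ∈ A.mulVecLin.ker))
    have hsum := A.mulVecLin.finrank_range_add_finrank_ker
    have hpos := Submodule.one_le_finrank_iff.mpr hker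
    rw [Module.finrank_fin_fun] at hsum
    rw [Matrix.rank]
    omega
  have hne : A.rank ≠ 0 := by
    rw [Matrix.rank_eq_finrank_span_cols, Ne, Submodule.finrank_eq_zero, Submodule.span_eq_bot]
    exact fun h => hA (Matrix.ext fun i j => by simpa using congrFun (h _ ⟨j, rfl⟩) i)
  omega

theorem Matrix.det_eq_zero_of_rank_lt {n R : Type*} [Fintype n] [DecidableEq n] [CommRing R]
    [IsDomain R] {A : Matrix n n R} (hA : A.rank < Fintype.card n) : A.det = 0 := by
  by_contra h
  exact hA.ne (Matrix.rank_of_det_ne_zero h)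

theorem Matrix.det_smul_add_smul_of_det_sub_eq_zero {R : Type*} [CommRing R]
    {ξ η : Matrix (Fin 2) (Fin 2) R} (h : (ξ - η).det = 0) (t : R) :
    (t • ξ + (1 - t) • η).det = t * ξ.det + (1 - t) * η.det := by
  simp only [Matrix.det_fin_two, Matrix.add_apply, Matrix.smul_apply, Matrix.sub_apply,
    smul_eq_mul] at h ⊢
  linear_combination (-(t * (1 - t))) * h

theorem PolyconvexFun.rankOneConvex {f : M₂ → ℝ} (hf : PolyconvexFun f) : RankOneConvex f := by
  obtain ⟨g, hg, hfg⟩ := hf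
  intro ξ η t ht hr
  have hpair : (t • ξ + (1 - t) • η, (t • ξ + (1 - t) • η).det)
      = t • (ξ, ξ.det) + (1 - t) • (η, η.det) := by
    rw [Matrix.det_smul_add_smul_of_det_sub_eq_zero
      (Matrix.det_eq_zero_of_rank_lt (by simp [hr]))]
    simp
  simpa only [hfg, hpair, smul_eq_mul] using
    hg.2 (Set.mem_univ _) (Set.mem_univ _) ht.1 (sub_nonneg.mpr ht.2) (add_sub_cancel t 1)

theorem rcHull_subset_pcHull (E : Set M₂) : rcHull E ⊆ pcHull E :=
  fun _ hξ f hf hfE => hξ f hf.rankOneConvex hfE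

theorem RankOneConvex.comp_mul_mul {f : M₂ → ℝ} (hf : RankOneConvex f) {R S : M₂}
    (hR : IsUnit R.det) (hS : IsUnit S.det) : RankOneConvex fun ξ => f (R * ξ * S) := by
  intro ξ η t ht hr
  have hsub : R * ξ * S - R * η * S = R * (ξ - η) * S := by
    simp only [Matrix.mul_sub, Matrix.sub_mul]
  have hrank : (R * ξ * S - R * η * S).rank = 1 := by
    rwa [hsub, Matrix.rank_mul_eq_left_of_isUnit_det _ _ hS,
      Matrix.rank_mul_eq_right_of_isUnit_det _ _ hR]
  simpa only [Matrix.mul_add, Matrix.add_mul, Matrix.mul_smul, Matrix.smul_mul] using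
    hf _ _ t ht hrank

theorem RankOneConvex.nonpos_of_abs_le {f : M₂ → ℝ} (hf : RankOneConvex f) {η v : M₂}
    (hv : v.rank = 1) {c s : ℝ} (hs : |s| ≤ c) (hpos : f (η + c • v) ≤ 0)
    (hneg : f (η + (-c) • v) ≤ 0) : f (η + s • v) ≤ 0 := by
  rcases (abs_nonneg s).trans hs |>.eq_or_lt with rfl | hc
  · rwa [abs_nonpos_iff.mp hs]
  set t := (s + c) / (2 * c)
  have ht : t ∈ Set.Icc (0 : ℝ) 1 := by
    rw [abs_le] at hs
    constructor
    · exact div_nonneg (by linarith) (by linarith)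
    · rw [div_le_one (by linarith)]; linarith
  have hrank : ((η + c • v) - (η + (-c) • v)).rank = 1 := by
    rw [add_sub_add_left_eq_sub, ← sub_smul,
      Matrix.rank_smul_of_mem_nonZeroDivisors _ (mem_nonZeroDivisors_of_ne_zero (by linarith)), hv]
  have hcomb : t • (η + c • v) + (1 - t) • (η + (-c) • v) = η + s • v := by
    have hts : (2 * t - 1) * c = s := by
      simp only [t]; field_simp; ring
    rw [← hts]; module
  have := hf _ _ t ht hrank
  rw [hcomb] at this
  nlinarith [ht.1, ht.2]

/-- `cmat z w` is the real matrix of `v ↦ z v + w v̄` on `ℂ ≅ ℝ²`. -/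
noncomputable def cmat (z w : ℂ) : M₂ :=
  !![z.re + w.re, -z.im + w.im; z.im + w.im, z.re - w.re]

theorem exists_eq_cmat (ξ : M₂) : ∃ z w, ξ = cmat z w := by
  refine ⟨⟨(ξ 0 0 + ξ 1 1) / 2, (ξ 1 0 - ξ 0 1) / 2⟩,
    ⟨(ξ 0 0 - ξ 1 1) / 2, (ξ 1 0 + ξ 0 1) / 2⟩, ?_⟩
  ext i j
  fin_cases i <;> fin_cases j <;> simp [cmat] <;> ring

theorem cmat_mul (z w z' w' : ℂ) :
    cmat z w * cmat z' w' =
      cmat (z * z' + w * starRingEnd ℂ w') (z * w' + w * starRingEnd ℂ z') := by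
  ext i j
  fin_cases i <;> fin_cases j <;>
    simp [cmat, Matrix.mul_apply, Fin.sum_univ_two, Complex.mul_re, Complex.mul_im] <;> ring

theorem cmat_add (z w z' w' : ℂ) : cmat z w + cmat z' w' = cmat (z + z') (w + w') := by
  ext i j
  fin_cases i <;> fin_cases j <;> simp [cmat] <;> ring

theorem cmat_smul (t : ℝ) (z w : ℂ) : t • cmat z w = cmat (t * z) (t * w) := by
  ext i j
  fin_cases i <;> fin_cases j <;> simp [cmat] <;> ring

theorem cmat_ofReal (r s : ℝ) : cmat r s = !![r + s, 0; 0, r - s] := by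
  ext i j
  fin_cases i <;> fin_cases j <;> simp [cmat]

theorem det_cmat (z w : ℂ) : (cmat z w).det = ‖z‖ ^ 2 - ‖w‖ ^ 2 := by
  simp [cmat, Matrix.det_fin_two, ← Complex.normSq_eq_norm_sq, Complex.normSq_apply]; ring

theorem frobSq_cmat (z w : ℂ) : frobSq (cmat z w) = 2 * (‖z‖ ^ 2 + ‖w‖ ^ 2) := by
  simp [cmat, frobSq, Fin.sum_univ_two, ← Complex.normSq_eq_norm_sq, Complex.normSq_apply]; ring

theorem lam_eq_of_frobSq_of_abs_det {ξ : M₂} {p q : ℝ} (hp : 0 ≤ p) (hpq : p ≤ q)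
    (hF : frobSq ξ = p ^ 2 + q ^ 2) (hD : |ξ.det| = p * q) : lam1 ξ = p ∧ lam2 ξ = q := by
  have hplus : Real.sqrt (frobSq ξ + 2 * |ξ.det|) = q + p := by
    rw [hF, hD, show p ^ 2 + q ^ 2 + 2 * (p * q) = (q + p) ^ 2 by ring,
      Real.sqrt_sq (by linarith)]
  have hminus : Real.sqrt (frobSq ξ - 2 * |ξ.det|) = q - p := by
    rw [hF, hD, show p ^ 2 + q ^ 2 - 2 * (p * q) = (q - p) ^ 2 by ring,
      Real.sqrt_sq (by linarith)]
  constructor <;> simp only [lam1, lam2, hplus, hminus] <;> ring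

theorem abs_det_cmat (z w : ℂ) : |(cmat z w).det| = |‖z‖ - ‖w‖| * (‖z‖ + ‖w‖) := by
  rw [det_cmat, show ‖z‖ ^ 2 - ‖w‖ ^ 2 = (‖z‖ - ‖w‖) * (‖z‖ + ‖w‖) by ring, abs_mul,
    abs_of_nonneg (a := ‖z‖ + ‖w‖) (by positivity)]

theorem lam_cmat (z w : ℂ) :
    lam1 (cmat z w) = |‖z‖ - ‖w‖| ∧ lam2 (cmat z w) = ‖z‖ + ‖w‖ := by
  refine lam_eq_of_frobSq_of_abs_det (abs_nonneg _)
    ((abs_norm_sub_norm_le z w).trans (norm_sub_le z w)) ?_ (abs_det_cmat z w)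
  rw [frobSq_cmat, sq_abs]; ring

theorem lam1_mul_lam2 (ξ : M₂) : lam1 ξ * lam2 ξ = |ξ.det| := by
  obtain ⟨z, w, rfl⟩ := exists_eq_cmat ξ
  rw [(lam_cmat z w).1, (lam_cmat z w).2, abs_det_cmat]

theorem lam2_add_le (ξ η : M₂) : lam2 (ξ + η) ≤ lam2 ξ + lam2 η := by
  obtain ⟨z, w, rfl⟩ := exists_eq_cmat ξ
  obtain ⟨z', w', rfl⟩ := exists_eq_cmat η
  simp only [cmat_add, (lam_cmat _ _).2]
  linarith [norm_add_le z z', norm_add_le w w']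

theorem lam2_smul (t : ℝ) (ξ : M₂) : lam2 (t • ξ) = |t| * lam2 ξ := by
  obtain ⟨z, w, rfl⟩ := exists_eq_cmat ξ
  simp only [cmat_smul, (lam_cmat _ _).2, norm_mul, Complex.norm_real, Real.norm_eq_abs]
  ring

theorem convexOn_lam2 : ConvexOn ℝ Set.univ lam2 := by
  refine ⟨convex_univ, fun ξ _ η _ s t hs ht _ => ?_⟩
  calc lam2 (s • ξ + t • η) ≤ lam2 (s • ξ) + lam2 (t • η) := lam2_add_le _ _
    _ = s * lam2 ξ + t * lam2 η := by
      rw [lam2_smul, lam2_smul, abs_of_nonneg hs, abs_of_nonneg ht]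

theorem polyconvexFun_lam2_sub (c : ℝ) : PolyconvexFun fun ξ => lam2 ξ - c :=
  ⟨fun p => lam2 p.1 + -c, (convexOn_lam2.comp_linearMap (LinearMap.fst ℝ M₂ ℝ)).add_const (-c),
    fun _ => sub_eq_add_neg _ _⟩

theorem polyconvexFun_abs_det_sub (c : ℝ) : PolyconvexFun fun ξ => |ξ.det| - c :=
  ⟨fun p => ‖p.2‖ + -c,
    ((convexOn_norm convex_univ).comp_linearMap (LinearMap.snd ℝ M₂ ℝ)).add_const (-c),
    fun _ => by simp [sub_eq_add_neg]⟩

theorem pcHull_lam_eq_subset_lam_le (a b : ℝ) :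
    pcHull {ξ | lam1 ξ = a ∧ lam2 ξ = b} ⊆ {ξ | lam1 ξ * lam2 ξ ≤ a * b ∧ lam2 ξ ≤ b} := by
  intro ξ hξ
  have hdet := hξ _ (polyconvexFun_abs_det_sub (a * b)) fun η ⟨h1, h2⟩ => by
    rw [← lam1_mul_lam2, h1, h2, sub_self]
  have hlam2 := hξ _ (polyconvexFun_lam2_sub b) fun η ⟨_, h2⟩ => by rw [h2, sub_self]
  exact ⟨by rw [lam1_mul_lam2]; linarith, by linarith⟩

section Rotations

variable {α β : ℂ}

theorem isUnit_det_cmat_rot (hα : ‖α‖ = 1) : IsUnit (cmat α 0).det := by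
  simp [det_cmat, hα]

theorem cmat_rot_mul_mul_rot (α β z w : ℂ) :
    cmat α 0 * cmat z w * cmat β 0 = cmat (α * z * β) (α * w * starRingEnd ℂ β) := by
  simp [cmat_mul]

theorem lam_cmat_rot_mul_mul_rot (hα : ‖α‖ = 1) (hβ : ‖β‖ = 1) (ξ : M₂) :
    lam1 (cmat α 0 * ξ * cmat β 0) = lam1 ξ ∧ lam2 (cmat α 0 * ξ * cmat β 0) = lam2 ξ := by
  obtain ⟨z, w, rfl⟩ := exists_eq_cmat ξ
  simp only [cmat_rot_mul_mul_rot, lam_cmat, norm_mul, Complex.norm_conj, hα, hβ, one_mul,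
    mul_one, and_self]

/-- Polar form of `z` and `w`: with `z = ‖z‖ e^{iθ}` and `w = ‖w‖ e^{iφ}`, take
`α = e^{i(θ+φ)/2}` and `β = e^{i(θ-φ)/2}`. -/
theorem exists_cmat_eq_rot_mul_cmat_norm_mul_rot (z w : ℂ) : ∃ α β : ℂ, ‖α‖ = 1 ∧ ‖β‖ = 1 ∧
    cmat z w = cmat α 0 * cmat ‖z‖ ‖w‖ * cmat β 0 := by
  set θ := z.arg
  set φ := w.arg
  refine ⟨Complex.exp (((θ + φ) / 2 : ℝ) * Complex.I),
    Complex.exp (((θ - φ) / 2 : ℝ) * Complex.I),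
    Complex.norm_exp_ofReal_mul_I _, Complex.norm_exp_ofReal_mul_I _, ?_⟩
  rw [cmat_rot_mul_mul_rot, ← Complex.exp_conj]
  conv_lhs => rw [← Complex.norm_mul_exp_arg_mul_I z, ← Complex.norm_mul_exp_arg_mul_I w]
  congr 1
  · rw [mul_comm _ (‖z‖ : ℂ), mul_assoc, ← Complex.exp_add]
    congr 2; push_cast; ring
  · rw [mul_comm _ (‖w‖ : ℂ), mul_assoc, ← Complex.exp_add]
    congr 2; simp only [map_mul, Complex.conj_ofReal, Complex.conj_I]; push_cast; ring

end Rotations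

section Diagonal

variable {a b : ℝ} {f : M₂ → ℝ}

theorem lam_upperTriangular (ha : 0 ≤ a) (hab : a ≤ b) {c d t : ℝ}
    (hF : c ^ 2 + d ^ 2 + t ^ 2 = a ^ 2 + b ^ 2) (hD : |c * d| = a * b) :
    lam1 !![c, t; 0, d] = a ∧ lam2 !![c, t; 0, d] = b :=
  lam_eq_of_frobSq_of_abs_det ha hab (by simp [frobSq, Fin.sum_univ_two]; linarith)
    (by simpa [Matrix.det_fin_two] using hD)

theorem nonpos_diag_of_abs_mul_eq (ha : 0 ≤ a) (hab : a ≤ b) (hf : RankOneConvex f)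
    (hfE : ∀ ξ, lam1 ξ = a → lam2 ξ = b → f ξ ≤ 0) {c d : ℝ} (hD : |c * d| = a * b)
    (hF : c ^ 2 + d ^ 2 ≤ a ^ 2 + b ^ 2) : f !![c, 0; 0, d] ≤ 0 := by
  set t := Real.sqrt (a ^ 2 + b ^ 2 - c ^ 2 - d ^ 2)
  have ht : t ^ 2 = a ^ 2 + b ^ 2 - c ^ 2 - d ^ 2 := Real.sq_sqrt (by linarith)
  have hshear (s : ℝ) (hs : s ^ 2 = t ^ 2) : f !![c, s; 0, d] ≤ 0 :=
    (lam_upperTriangular ha hab (by linarith) hD).elim (hfE _)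
  simpa using hf.nonpos_of_abs_le (η := !![c, 0; 0, d]) (v := !![0, 1; 0, 0]) (c := t)
    (s := 0) (Matrix.rank_eq_one_of_det_eq_zero (by simp [← Matrix.ext_iff]) (by simp))
    (by rw [abs_zero]; exact Real.sqrt_nonneg _) (by simpa using hshear t rfl)
    (by simpa using hshear (-t) (by ring))

theorem sq_add_div_sq_le (ha : 0 < a) {u : ℝ} (hau : a ≤ u) (hub : u ≤ b) :
    u ^ 2 + (a * b / u) ^ 2 ≤ a ^ 2 + b ^ 2 := by
  have hu : 0 < u := ha.trans_le hau
  rw [div_pow, ← sub_nonneg, show a ^ 2 + b ^ 2 - (u ^ 2 + (a * b) ^ 2 / u ^ 2)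
    = (u ^ 2 - a ^ 2) * (b ^ 2 - u ^ 2) / u ^ 2 by field_simp; ring]
  exact div_nonneg (mul_nonneg (by nlinarith) (by nlinarith)) (by positivity)

theorem nonpos_diag_of_le_abs_left (ha : 0 < a) (hab : a ≤ b) (hf : RankOneConvex f)
    (hfE : ∀ ξ, lam1 ξ = a → lam2 ξ = b → f ξ ≤ 0) {x y : ℝ} (hax : a ≤ |x|) (hxb : |x| ≤ b)
    (hxy : |x * y| ≤ a * b) : f !![x, 0; 0, y] ≤ 0 := by
  have hx : 0 < |x| := ha.trans_le hax
  have hend (d : ℝ) (hd : |d| = a * b / |x|) : f !![x, 0; 0, d] ≤ 0 :=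
    nonpos_diag_of_abs_mul_eq ha.le hab hf hfE (by rw [abs_mul, hd, mul_div_cancel₀ _ hx.ne'])
      (by rw [← sq_abs x, ← sq_abs d, hd]; exact sq_add_div_sq_le ha hax hxb)
  have hm : 0 ≤ a * b / |x| := div_nonneg (mul_nonneg ha.le (ha.le.trans hab)) hx.le
  simpa using hf.nonpos_of_abs_le (η := !![x, 0; 0, 0]) (v := !![0, 0; 0, 1])
    (c := a * b / |x|) (s := y)
    (Matrix.rank_eq_one_of_det_eq_zero (by simp [← Matrix.ext_iff]) (by simp))
    (by rwa [le_div_iff₀ hx, mul_comm, ← abs_mul])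
    (by simpa using hend _ (abs_of_nonneg hm))
    (by simpa using hend _ (by rw [abs_neg, abs_of_nonneg hm]))

theorem nonpos_diag_of_le_abs_right (ha : 0 < a) (hab : a ≤ b) (hf : RankOneConvex f)
    (hfE : ∀ ξ, lam1 ξ = a → lam2 ξ = b → f ξ ≤ 0) {x y : ℝ} (hay : a ≤ |y|) (hyb : |y| ≤ b)
    (hxy : |x * y| ≤ a * b) : f !![x, 0; 0, y] ≤ 0 := by
  have hy : 0 < |y| := ha.trans_le hay
  have hend (c : ℝ) (hc : |c| = a * b / |y|) : f !![c, 0; 0, y] ≤ 0 :=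
    nonpos_diag_of_abs_mul_eq ha.le hab hf hfE (by rw [abs_mul, hc, div_mul_cancel₀ _ hy.ne'])
      (by rw [← sq_abs y, ← sq_abs c, hc, add_comm]; exact sq_add_div_sq_le ha hay hyb)
  have hm : 0 ≤ a * b / |y| := div_nonneg (mul_nonneg ha.le (ha.le.trans hab)) hy.le
  simpa using hf.nonpos_of_abs_le (η := !![0, 0; 0, y]) (v := !![1, 0; 0, 0])
    (c := a * b / |y|) (s := x)
    (Matrix.rank_eq_one_of_det_eq_zero (by simp [← Matrix.ext_iff]) (by simp))
    (by rwa [le_div_iff₀ hy, ← abs_mul])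
    (by simpa using hend _ (abs_of_nonneg hm))
    (by simpa using hend _ (by rw [abs_neg, abs_of_nonneg hm]))

theorem nonpos_diag (ha : 0 < a) (hab : a ≤ b) (hf : RankOneConvex f)
    (hfE : ∀ ξ, lam1 ξ = a → lam2 ξ = b → f ξ ≤ 0) {x y : ℝ} (hxb : |x| ≤ b) (hyb : |y| ≤ b)
    (hxy : |x * y| ≤ a * b) : f !![x, 0; 0, y] ≤ 0 := by
  by_cases hax : a ≤ |x|
  · exact nonpos_diag_of_le_abs_left ha hab hf hfE hax hxb hxy
  by_cases hay : a ≤ |y|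
  · exact nonpos_diag_of_le_abs_right ha hab hf hfE hay hyb hxy
  have hend (c : ℝ) (hc : |c| = a) : f !![c, 0; 0, y] ≤ 0 :=
    nonpos_diag_of_le_abs_left ha hab hf hfE hc.ge (hc.trans_le hab)
      (by rw [abs_mul, hc]; nlinarith [abs_nonneg y])
  simpa using hf.nonpos_of_abs_le (η := !![0, 0; 0, y]) (v := !![1, 0; 0, 0]) (c := a)
    (s := x) (Matrix.rank_eq_one_of_det_eq_zero (by simp [← Matrix.ext_iff]) (by simp))
    (not_le.mp hax).le
    (by simpa using hend a (abs_of_pos ha)) (by simpa using hend (-a) (by simp [ha.le]))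

end Diagonal

theorem lam_le_subset_rcHull_lam_eq {a b : ℝ} (ha : 0 < a) (hab : a ≤ b) :
    {ξ | lam1 ξ * lam2 ξ ≤ a * b ∧ lam2 ξ ≤ b} ⊆ rcHull {ξ | lam1 ξ = a ∧ lam2 ξ = b} := by
  rintro ξ ⟨hdet, hlam2⟩ f hf hfE
  obtain ⟨z, w, rfl⟩ := exists_eq_cmat ξ
  obtain ⟨α, β, hα, hβ, hzw⟩ := exists_cmat_eq_rot_mul_cmat_norm_mul_rot z w
  simp only [lam_cmat] at hdet hlam2
  have hg : RankOneConvex fun ξ => f (cmat α 0 * ξ * cmat β 0) :=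
    hf.comp_mul_mul (isUnit_det_cmat_rot hα) (isUnit_det_cmat_rot hβ)
  have hgE (ξ : M₂) (h1 : lam1 ξ = a) (h2 : lam2 ξ = b) : f (cmat α 0 * ξ * cmat β 0) ≤ 0 :=
    hfE _ ⟨(lam_cmat_rot_mul_mul_rot hα hβ ξ).1.trans h1,
      (lam_cmat_rot_mul_mul_rot hα hβ ξ).2.trans h2⟩
  rw [hzw, cmat_ofReal]
  refine nonpos_diag ha hab hg hgE ?_ ?_ ?_
  · rwa [abs_of_nonneg (by positivity)]
  · exact (abs_norm_sub_norm_le z w).trans ((norm_sub_le z w).trans hlam2)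
  · rwa [abs_mul, mul_comm, abs_of_nonneg (a := ‖z‖ + ‖w‖) (by positivity)]

/-- the hulls of the set of matrices with prescribed singular values `a ≤ b`. -/
theorem pcHull_eq_rcHull_singleton (a b : ℝ) (ha : 0 < a) (hab : a ≤ b)
    (E : Set (Matrix (Fin 2) (Fin 2) ℝ)) (hE : E = {ξ | lam1 ξ = a ∧ lam2 ξ = b}) :
    pcHull E = rcHull E ∧
    pcHull E = {ξ | lam1 ξ * lam2 ξ ≤ a * b ∧ lam2 ξ ≤ b} := by
  subst hE
  have hpc := pcHull_lam_eq_subset_lam_le a b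
  have hrc := lam_le_subset_rcHull_lam_eq ha hab
  exact ⟨(hpc.trans hrc).antisymm (rcHull_subset_pcHull _),
    hpc.antisymm (hrc.trans (rcHull_subset_pcHull _))⟩
end

section
/- Let K ⊂ {(x,y) ∈ ℝ² : 0 < x ≤ y} be compact, let 0 < ε_{n+1} < ε_n < a₀/2 where a₀ = min_{(a,b)∈K} a, and for (a,b) ∈ K set V^n_{(a,b)} := {ξ ∈ ℝ^{2×2} : a − 2ε_n < λ₁(ξ) < a − ε_n, b − ε_n < λ₂(ξ) < b − ε_n/2}. Then V^n_{(a,b)} ⊆ (V^{n+1}_{(a,b)})^{rc}. -/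
open scoped BigOperators

/-!
Write `ξ = s • A + d • B` where `A`, `B` are the two rank-one terms of a singular value
decomposition, so that `ξ` has singular values `|d| ≤ s`. A rank-one convex function is convex
along the lines in the directions `A` and `B`, so on the rectangle `|s'| ≤ σ`, `|d'| ≤ δ` it is
bounded by its values at the four corners `±σ • A ± δ • B`, whose singular values are `δ ≤ σ`.
Since `ε₂ < ε₁` and `a ≤ b`, one can choose `δ ∈ (a - 2ε₂, a - ε₂)` with `|d| ≤ δ` and
`σ ∈ (b - ε₂, b - ε₂/2)` with `s ≤ σ`: then the corners lie in `V ε₂`, and `ξ` lies in the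
rank-one convex hull of these four matrices.
-/

open Set Matrix Real

namespace Matrix

variable {m n K : Type*} [Field K] [Fintype n] [DecidableEq n]

theorem rank_lt_card_of_det_eq_zero {A : Matrix n n K} (h : A.det = 0) :
    A.rank < Fintype.card n := by
  obtain ⟨v, hv, hAv⟩ := exists_mulVec_eq_zero_iff.mpr h
  have hker : 0 < Module.finrank K (LinearMap.ker A.mulVecLin) :=
    Module.finrank_pos_iff_exists_ne_zero.mpr ⟨⟨v, hAv⟩, fun h0 => hv (congrArg Subtype.val h0)⟩
  have := LinearMap.finrank_range_add_finrank_ker A.mulVecLin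
  rw [Module.finrank_fintype_fun_eq_card] at this
  rw [rank]
  omega

theorem rank_pos_of_ne_zero {A : Matrix m n K} (h : A ≠ 0) : 0 < A.rank := by
  rwa [rank, Nat.pos_iff_ne_zero, Ne, Submodule.finrank_eq_zero, LinearMap.range_eq_bot,
    ← toLin'_apply', LinearEquiv.map_eq_zero_iff]

theorem rank_eq_one_of_det_eq_zero_s13 {A : Matrix (Fin 2) (Fin 2) K} (h : A.det = 0) (hA : A ≠ 0) :
    A.rank = 1 := by
  have := rank_lt_card_of_det_eq_zero h
  have := rank_pos_of_ne_zero hA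
  rw [Fintype.card_fin] at *
  omega

end Matrix

theorem RankOneConvex.convexOn_line {f : Matrix (Fin 2) (Fin 2) ℝ → ℝ} (hf : RankOneConvex f)
    (ξ : Matrix (Fin 2) (Fin 2) ℝ) {A : Matrix (Fin 2) (Fin 2) ℝ} (hA : A.rank = 1) :
    ConvexOn ℝ univ fun t : ℝ => f (ξ + t • A) := by
  refine ⟨convex_univ, fun x _ y _ a b ha hb hab => ?_⟩
  obtain rfl : b = 1 - a := by linarith
  rcases eq_or_ne x y with rfl | hxy
  · rw [Convex.combo_self hab, Convex.combo_self hab]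
  have hrank : ((ξ + x • A) - (ξ + y • A)).rank = 1 := by
    rw [add_sub_add_left_eq_sub, ← sub_smul,
      rank_smul_of_mem_nonZeroDivisors _ (mem_nonZeroDivisors_of_ne_zero (sub_ne_zero.mpr hxy)),
      hA]
  have h := hf _ _ a ⟨ha, by linarith⟩ hrank
  rwa [show a • (ξ + x • A) + (1 - a) • (ξ + y • A) = ξ + (a • x + (1 - a) • y) • A by module] at h

theorem le_max_of_mem_Icc_of_separately_convexOn {g : ℝ → ℝ → ℝ}
    (hg₁ : ∀ y, ConvexOn ℝ univ (g · y)) (hg₂ : ∀ x, ConvexOn ℝ univ (g x))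
    {x₁ x₂ y₁ y₂ x y : ℝ} (hx : x ∈ Icc x₁ x₂) (hy : y ∈ Icc y₁ y₂) :
    g x y ≤ max (max (g x₁ y₁) (g x₁ y₂)) (max (g x₂ y₁) (g x₂ y₂)) :=
  ((hg₁ y).le_max_of_mem_Icc trivial trivial hx).trans <|
    max_le_max ((hg₂ x₁).le_max_of_mem_Icc trivial trivial hy)
      ((hg₂ x₂).le_max_of_mem_Icc trivial trivial hy)

theorem smul_add_smul_mem_rcHull {A B : Matrix (Fin 2) (Fin 2) ℝ} (hA : A.rank = 1)
    (hB : B.rank = 1) {σ δ s d : ℝ} (hs : |s| ≤ σ) (hd : |d| ≤ δ) :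
    s • A + d • B ∈ rcHull ((fun p : ℝ × ℝ => p.1 • A + p.2 • B) '' ({σ, -σ} ×ˢ {δ, -δ})) := by
  intro f hf hE
  have hcorner : ∀ x ∈ ({σ, -σ} : Set ℝ), ∀ y ∈ ({δ, -δ} : Set ℝ), f (x • A + y • B) ≤ 0 :=
    fun x hx y hy => hE _ ⟨(x, y), ⟨hx, hy⟩, rfl⟩
  refine (le_max_of_mem_Icc_of_separately_convexOn (g := fun x y => f (x • A + y • B))
    (fun y => by simpa only [add_comm] using hf.convexOn_line (y • B) hA)
    (fun x => hf.convexOn_line (x • A) hB) (abs_le.mp hs) (abs_le.mp hd)).trans ?_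
  exact max_le (max_le (hcorner _ (by simp) _ (by simp)) (hcorner _ (by simp) _ (by simp)))
    (max_le (hcorner _ (by simp) _ (by simp)) (hcorner _ (by simp) _ (by simp)))

section SingularValues

variable {ξ : Matrix (Fin 2) (Fin 2) ℝ} {s d : ℝ}

theorem sqrt_frobSq_add_two_abs_det (hF : frobSq ξ = s ^ 2 + d ^ 2) (hD : ξ.det = s * d) :
    √(frobSq ξ + 2 * |ξ.det|) = |s| + |d| := by
  rw [hF, hD, abs_mul, ← sq_abs s, ← sq_abs d, show |s| ^ 2 + |d| ^ 2 + 2 * (|s| * |d|)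
    = (|s| + |d|) ^ 2 by ring, sqrt_sq (by positivity)]

theorem sqrt_frobSq_sub_two_abs_det (hF : frobSq ξ = s ^ 2 + d ^ 2) (hD : ξ.det = s * d) :
    √(frobSq ξ - 2 * |ξ.det|) = |(|s| - |d|)| := by
  rw [hF, hD, abs_mul, ← sq_abs s, ← sq_abs d, show |s| ^ 2 + |d| ^ 2 - 2 * (|s| * |d|)
    = (|s| - |d|) ^ 2 by ring, sqrt_sq_eq_abs]

theorem lam1_eq_min_abs (hF : frobSq ξ = s ^ 2 + d ^ 2) (hD : ξ.det = s * d) :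
    lam1 ξ = min |s| |d| := by
  rw [lam1, sqrt_frobSq_add_two_abs_det hF hD, sqrt_frobSq_sub_two_abs_det hF hD]
  rcases le_total |s| |d| with h | h
  · rw [min_eq_left h, abs_of_nonpos (sub_nonpos.mpr h)]; ring
  · rw [min_eq_right h, abs_of_nonneg (sub_nonneg.mpr h)]; ring

theorem lam2_eq_max_abs (hF : frobSq ξ = s ^ 2 + d ^ 2) (hD : ξ.det = s * d) :
    lam2 ξ = max |s| |d| := by
  rw [lam2, sqrt_frobSq_add_two_abs_det hF hD, sqrt_frobSq_sub_two_abs_det hF hD]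
  rcases le_total |s| |d| with h | h
  · rw [max_eq_right h, abs_of_nonpos (sub_nonpos.mpr h)]; ring
  · rw [max_eq_left h, abs_of_nonneg (sub_nonneg.mpr h)]; ring

end SingularValues

/-- Encodes that `s • A + d • B` has singular values `|s|` and `|d|` for all `s`, `d`
(see `lam1_eq_min_abs`); for instance `A = u₁ v₁ᵀ`, `B = u₂ v₂ᵀ` for orthonormal bases `u`, `v` of
the same orientation. -/
def IsSingularFrame (A B : Matrix (Fin 2) (Fin 2) ℝ) : Prop :=
  ∀ s d : ℝ, frobSq (s • A + d • B) = s ^ 2 + d ^ 2 ∧ (s • A + d • B).det = s * d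

namespace IsSingularFrame

variable {A B : Matrix (Fin 2) (Fin 2) ℝ}

theorem symm (h : IsSingularFrame A B) : IsSingularFrame B A := fun s d => by
  rw [add_comm, add_comm (s ^ 2), mul_comm s]
  exact h d s

theorem lam1_eq (h : IsSingularFrame A B) (s d : ℝ) : lam1 (s • A + d • B) = min |s| |d| :=
  lam1_eq_min_abs (h s d).1 (h s d).2

theorem lam2_eq (h : IsSingularFrame A B) (s d : ℝ) : lam2 (s • A + d • B) = max |s| |d| :=
  lam2_eq_max_abs (h s d).1 (h s d).2

theorem rank_left (h : IsSingularFrame A B) : A.rank = 1 := by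
  obtain ⟨hF, hD⟩ := h 1 0
  simp only [one_smul, zero_smul, add_zero] at hF hD
  refine rank_eq_one_of_det_eq_zero_s13 (by simpa using hD) ?_
  rintro rfl
  simp [frobSq] at hF

theorem rank_right (h : IsSingularFrame A B) : B.rank = 1 :=
  h.symm.rank_left

end IsSingularFrame

noncomputable def rotationMatrix (α : ℝ) : Matrix (Fin 2) (Fin 2) ℝ :=
  !![cos α, -sin α; sin α, cos α]

noncomputable def reflectionMatrix (β : ℝ) : Matrix (Fin 2) (Fin 2) ℝ :=
  !![cos β, sin β; sin β, -cos β]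

section RotationReflection

variable (R S α β : ℝ)

theorem frobSq_smul_rotationMatrix_add_smul_reflectionMatrix :
    frobSq (R • rotationMatrix α + S • reflectionMatrix β) = 2 * (R ^ 2 + S ^ 2) := by
  simp only [frobSq, Fin.sum_univ_two, rotationMatrix, reflectionMatrix, Matrix.add_apply,
    Matrix.smul_apply, of_apply, cons_val', cons_val_zero, cons_val_one, cons_val_fin_one,
    smul_eq_mul]
  linear_combination 2 * R ^ 2 * cos_sq_add_sin_sq α + 2 * S ^ 2 * cos_sq_add_sin_sq β

theorem det_smul_rotationMatrix_add_smul_reflectionMatrix :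
    (R • rotationMatrix α + S • reflectionMatrix β).det = R ^ 2 - S ^ 2 := by
  simp only [det_fin_two, rotationMatrix, reflectionMatrix, Matrix.add_apply, Matrix.smul_apply,
    of_apply, cons_val', cons_val_zero, cons_val_one, cons_val_fin_one, smul_eq_mul]
  linear_combination R ^ 2 * cos_sq_add_sin_sq α - S ^ 2 * cos_sq_add_sin_sq β

end RotationReflection

theorem isSingularFrame_rotationMatrix_reflectionMatrix (α β : ℝ) :
    IsSingularFrame ((2⁻¹ : ℝ) • (rotationMatrix α + reflectionMatrix β))
      ((2⁻¹ : ℝ) • (rotationMatrix α - reflectionMatrix β)) := by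
  intro s d
  rw [show s • (2⁻¹ : ℝ) • (rotationMatrix α + reflectionMatrix β)
      + d • (2⁻¹ : ℝ) • (rotationMatrix α - reflectionMatrix β)
      = ((s + d) / 2) • rotationMatrix α + ((s - d) / 2) • reflectionMatrix β by module,
    frobSq_smul_rotationMatrix_add_smul_reflectionMatrix,
    det_smul_rotationMatrix_add_smul_reflectionMatrix]
  constructor <;> ring

/-- The conformal and anticonformal parts of `ξ`, in polar form. -/
theorem exists_eq_smul_rotationMatrix_add_smul_reflectionMatrix (ξ : Matrix (Fin 2) (Fin 2) ℝ) :
    ∃ R S α β : ℝ, 0 ≤ R ∧ 0 ≤ S ∧ ξ = R • rotationMatrix α + S • reflectionMatrix β := by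
  let z : ℂ := ⟨(ξ 0 0 + ξ 1 1) / 2, (ξ 1 0 - ξ 0 1) / 2⟩
  let w : ℂ := ⟨(ξ 0 0 - ξ 1 1) / 2, (ξ 1 0 + ξ 0 1) / 2⟩
  refine ⟨‖z‖, ‖w‖, z.arg, w.arg, norm_nonneg z, norm_nonneg w, ?_⟩
  ext i j
  fin_cases i <;> fin_cases j <;>
    simp only [Fin.zero_eta, Fin.mk_one, Fin.isValue, rotationMatrix, reflectionMatrix,
      Matrix.add_apply, Matrix.smul_apply, of_apply, cons_val', cons_val_zero, cons_val_one,
      cons_val_fin_one, smul_eq_mul, mul_neg, Complex.norm_mul_cos_arg, Complex.norm_mul_sin_arg,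
      z, w] <;> ring

theorem exists_isSingularFrame_eq (ξ : Matrix (Fin 2) (Fin 2) ℝ) :
    ∃ (A B : Matrix (Fin 2) (Fin 2) ℝ) (s d : ℝ), IsSingularFrame A B ∧ |d| ≤ s ∧
      ξ = s • A + d • B := by
  obtain ⟨R, S, α, β, hR, hS, rfl⟩ := exists_eq_smul_rotationMatrix_add_smul_reflectionMatrix ξ
  refine ⟨_, _, R + S, R - S, isSingularFrame_rotationMatrix_reflectionMatrix α β,
    abs_le.mpr ⟨by linarith, by linarith⟩, ?_⟩
  module

theorem V_subset_rcHullOpen_V_general (K : Set (ℝ × ℝ))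
    (hKsub : K ⊆ {p : ℝ × ℝ | 0 < p.1 ∧ p.1 ≤ p.2})
    (a b : ℝ) (hab : (a, b) ∈ K)
    (ε₁ ε₂ : ℝ) (hε₂ : 0 < ε₂) (hε₂₁ : ε₂ < ε₁)
    (V : ℝ → Set (Matrix (Fin 2) (Fin 2) ℝ))
    (hV : ∀ e, V e = {ξ | a - 2 * e < lam1 ξ ∧ lam1 ξ < a - e ∧
      b - e < lam2 ξ ∧ lam2 ξ < b - e / 2}) :
    V ε₁ ⊆ rcHullOpen (V ε₂) := by
  intro ξ hξ
  obtain ⟨A, B, s, d, hAB, hds, rfl⟩ := exists_isSingularFrame_eq ξ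
  have hs : 0 ≤ s := (abs_nonneg d).trans hds
  have hds' : |d| ≤ |s| := hds.trans (le_abs_self s)
  rw [hV, Set.mem_ofPred_eq, hAB.lam1_eq, hAB.lam2_eq, min_eq_right hds', max_eq_left hds',
    abs_of_nonneg hs] at hξ
  have hba : a ≤ b := (hKsub hab).2
  obtain ⟨μ₁, hμ₁, hμ₁a⟩ := exists_between
    (max_lt (show |d| < a - ε₂ by linarith) (show a - 2 * ε₂ < a - ε₂ by linarith))
  obtain ⟨μ₂, hμ₂, hμ₂b⟩ := exists_between
    (max_lt (show s < b - ε₂ / 2 by linarith) (show b - ε₂ < b - ε₂ / 2 by linarith))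
  rw [max_lt_iff] at hμ₁ hμ₂
  have hμ₁₂ : μ₁ ≤ μ₂ := by linarith
  refine ⟨_, ?_, (Set.toFinite _).isCompact,
    smul_add_smul_mem_rcHull hAB.rank_left hAB.rank_right (σ := μ₂) (δ := μ₁)
      (abs_le.mpr ⟨by linarith, by linarith⟩) hμ₁.1.le⟩
  rintro _ ⟨⟨x, y⟩, ⟨hx, hy⟩, rfl⟩
  have hμ₁0 : 0 ≤ μ₁ := (abs_nonneg d).trans hμ₁.1.le
  rw [hV, Set.mem_ofPred_eq, hAB.lam1_eq, hAB.lam2_eq, (abs_eq (hμ₁0.trans hμ₁₂)).mpr hx,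
    (abs_eq hμ₁0).mpr hy, min_eq_right hμ₁₂, max_eq_left hμ₁₂]
  exact ⟨hμ₁.2, hμ₁a, hμ₂.2, hμ₂b⟩

/-- the inclusion `V^n_{(a,b)} ⊆ (V^{n+1}_{(a,b)})^{rc}`. -/
theorem V_subset_rcHullOpen_V (K : Set (ℝ × ℝ)) (hKc : IsCompact K)
    (hKsub : K ⊆ {p : ℝ × ℝ | 0 < p.1 ∧ p.1 ≤ p.2})
    (a b : ℝ) (hab : (a, b) ∈ K)
    (ε₁ ε₂ : ℝ) (hε₂ : 0 < ε₂) (hε₂₁ : ε₂ < ε₁) (hε₁ : ε₁ < sInf (Prod.fst '' K) / 2)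
    (V : ℝ → Set (Matrix (Fin 2) (Fin 2) ℝ))
    (hV : ∀ e, V e = {ξ | a - 2 * e < lam1 ξ ∧ lam1 ξ < a - e ∧
      b - e < lam2 ξ ∧ lam2 ξ < b - e / 2}) :
    V ε₁ ⊆ rcHullOpen (V ε₂) :=
  V_subset_rcHullOpen_V_general K hKsub a b hab ε₁ ε₂ hε₂ hε₂₁ V hV
end

section
/- Let K ⊂ {(x,y) ∈ ℝ² : 0 < x ≤ y} be compact, let E := {ξ ∈ ℝ^{2×2} : (λ₁(ξ), λ₂(ξ)) ∈ K}, let 0 < ε_n < a₀/2 where a₀ = min_{(a,b)∈K} a, and let U_n := {ξ ∈ ℝ^{2×2} : ∃(a,b) ∈ K, a − 2ε_n < λ₁(ξ) < a − ε_n and b − ε_n < λ₂(ξ) < b − ε_n/2}. Then for every ξ ∈ U_n one has dist(ξ, E) ≤ 3√2 · ε_n, where dist is with respect to the Frobenius norm. -/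
open scoped BigOperators

/-!
Write `ξ` as `v ↦ z v + w v̄` on `ℂ ≅ ℝ²`. Then `‖ξ‖² = 2(|z|² + |w|²)`, `λ₁(ξ) = ||z| - |w||` and
`λ₂(ξ) = |z| + |w|`. Rescaling `z` and `w` radially to the moduli `(p₂ ± p₁)/2` (the sign matched to
that of `|z| - |w|`) produces `η` with singular values `(p₁, p₂)` at Frobenius distance exactly
`|λ(ξ) - p|`. For `ξ ∈ U` and its witness `p ∈ K` this is `< √5 ε ≤ 3√2 ε`.
-/

theorem exists_norm_eq_norm_sub_eq_abs {V : Type*} [NormedAddCommGroup V] [NormedSpace ℝ V]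
    [Nontrivial V] (x : V) {r : ℝ} (hr : 0 ≤ r) : ∃ y : V, ‖y‖ = r ∧ ‖x - y‖ = |‖x‖ - r| := by
  rcases eq_or_ne x 0 with rfl | hx
  · obtain ⟨y, hy⟩ := exists_norm_eq V hr
    exact ⟨y, hy, by simp [hy, abs_of_nonneg hr]⟩
  · have hx' : ‖x‖ ≠ 0 := norm_ne_zero_iff.mpr hx
    refine ⟨(r / ‖x‖) • x, ?_, ?_⟩
    · rw [norm_smul, Real.norm_of_nonneg (by positivity), div_mul_cancel₀ _ hx']
    · have : x - (r / ‖x‖) • x = (1 - r / ‖x‖) • x := by rw [sub_smul, one_smul]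
      rw [this, norm_smul, Real.norm_eq_abs, ← abs_norm x, ← abs_mul, abs_norm, sub_mul, one_mul,
        div_mul_cancel₀ _ hx']

theorem two_mul_sq_add_sq_pm_two_mul_abs {c a : ℝ} (hc : 0 ≤ c) (ha : 0 ≤ a) :
    2 * (c ^ 2 + a ^ 2) + 2 * |c ^ 2 - a ^ 2| = (c + a + |c - a|) ^ 2 ∧
      2 * (c ^ 2 + a ^ 2) - 2 * |c ^ 2 - a ^ 2| = (c + a - |c - a|) ^ 2 := by
  have h : |c ^ 2 - a ^ 2| = (c + a) * |c - a| := by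
    rw [← abs_of_nonneg (add_nonneg hc ha), ← abs_mul]; ring_nf
  constructor <;> rw [h] <;> ring_nf <;> rw [sq_abs] <;> ring

/-- The matrix of `v ↦ z * v + w * conj v` on `ℂ ≅ ℝ²`. -/
def confAnticonf (z w : ℂ) : Matrix (Fin 2) (Fin 2) ℝ :=
  !![z.re + w.re, w.im - z.im; z.im + w.im, z.re - w.re]

theorem exists_confAnticonf_eq (ξ : Matrix (Fin 2) (Fin 2) ℝ) :
    ∃ z w, confAnticonf z w = ξ := by
  refine ⟨⟨(ξ 0 0 + ξ 1 1) / 2, (ξ 1 0 - ξ 0 1) / 2⟩,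
    ⟨(ξ 0 0 - ξ 1 1) / 2, (ξ 0 1 + ξ 1 0) / 2⟩, ?_⟩
  ext i j; fin_cases i <;> fin_cases j <;> simp [confAnticonf] <;> ring

theorem confAnticonf_sub (z w z' w' : ℂ) :
    confAnticonf z w - confAnticonf z' w' = confAnticonf (z - z') (w - w') := by
  ext i j; fin_cases i <;> fin_cases j <;> simp [confAnticonf] <;> ring

theorem frobSq_confAnticonf (z w : ℂ) :
    frobSq (confAnticonf z w) = 2 * (‖z‖ ^ 2 + ‖w‖ ^ 2) := by
  simp only [frobSq, confAnticonf, Matrix.of_apply, Matrix.cons_val', Matrix.cons_val_fin_one,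
    Fin.sum_univ_two, Matrix.cons_val_zero, Matrix.cons_val_one, Complex.sq_norm,
    Complex.normSq_apply]
  ring

theorem det_confAnticonf (z w : ℂ) : (confAnticonf z w).det = ‖z‖ ^ 2 - ‖w‖ ^ 2 := by
  simp only [confAnticonf, Matrix.det_fin_two_of, Complex.sq_norm, Complex.normSq_apply]
  ring

theorem lam1_confAnticonf_and_lam2_confAnticonf (z w : ℂ) :
    lam1 (confAnticonf z w) = |‖z‖ - ‖w‖| ∧ lam2 (confAnticonf z w) = ‖z‖ + ‖w‖ := by
  obtain ⟨hadd, hsub⟩ := two_mul_sq_add_sq_pm_two_mul_abs (norm_nonneg z) (norm_nonneg w)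
  have hle : |‖z‖ - ‖w‖| ≤ ‖z‖ + ‖w‖ :=
    abs_le.mpr ⟨by linarith [norm_nonneg z], by linarith [norm_nonneg w]⟩
  rw [lam1, lam2, frobSq_confAnticonf, det_confAnticonf, hadd, hsub,
    Real.sqrt_sq (by positivity), Real.sqrt_sq (by linarith)]
  constructor <;> ring

theorem exists_confAnticonf_norm_eq (z w : ℂ) {C A : ℝ} (hC : 0 ≤ C) (hA : 0 ≤ A) :
    ∃ z' w', ‖z'‖ = C ∧ ‖w'‖ = A ∧
      frobSq (confAnticonf z w - confAnticonf z' w') = 2 * ((‖z‖ - C) ^ 2 + (‖w‖ - A) ^ 2) := by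
  obtain ⟨z', hz', hzz'⟩ := exists_norm_eq_norm_sub_eq_abs z hC
  obtain ⟨w', hw', hww'⟩ := exists_norm_eq_norm_sub_eq_abs w hA
  refine ⟨z', w', hz', hw', ?_⟩
  rw [confAnticonf_sub, frobSq_confAnticonf, hzz', hww', sq_abs, sq_abs]

theorem exists_lam_eq_frobSq_sub_eq (ξ : Matrix (Fin 2) (Fin 2) ℝ) {p₁ p₂ : ℝ}
    (hp₁ : 0 ≤ p₁) (hp : p₁ ≤ p₂) :
    ∃ η, lam1 η = p₁ ∧ lam2 η = p₂ ∧
      frobSq (ξ - η) = (lam1 ξ - p₁) ^ 2 + (lam2 ξ - p₂) ^ 2 := by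
  obtain ⟨z, w, rfl⟩ := exists_confAnticonf_eq ξ
  obtain ⟨hlam1, hlam2⟩ := lam1_confAnticonf_and_lam2_confAnticonf z w
  obtain ⟨d, hd, hsq⟩ : ∃ d, |d| = p₁ ∧ (‖z‖ - ‖w‖ - d) ^ 2 = (|‖z‖ - ‖w‖| - p₁) ^ 2 := by
    rcases le_total ‖w‖ ‖z‖ with h | h
    · exact ⟨p₁, abs_of_nonneg hp₁, by rw [abs_of_nonneg (sub_nonneg.mpr h)]⟩
    · refine ⟨-p₁, by rw [abs_neg, abs_of_nonneg hp₁], ?_⟩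
      rw [abs_of_nonpos (sub_nonpos.mpr h)]; ring
  have hdp : |d| ≤ p₂ := hd ▸ hp
  obtain ⟨z', w', hz', hw', hfrob⟩ := exists_confAnticonf_norm_eq z w
    (C := (p₂ + d) / 2) (A := (p₂ - d) / 2)
    (by linarith [neg_abs_le d]) (by linarith [le_abs_self d])
  obtain ⟨hlam1', hlam2'⟩ := lam1_confAnticonf_and_lam2_confAnticonf z' w'
  refine ⟨confAnticonf z' w', ?_, ?_, ?_⟩
  · rw [hlam1', hz', hw', ← hd]; ring_nf
  · rw [hlam2', hz', hw']; ring
  · rw [hfrob, hlam1, hlam2, ← hsq]; ring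

theorem distE_le_frobNorm_sub {ξ η : Matrix (Fin 2) (Fin 2) ℝ} {E : Set (Matrix (Fin 2) (Fin 2) ℝ)}
    (hη : η ∈ E) : distE ξ E ≤ frobNorm (ξ - η) :=
  csInf_le ⟨0, by rintro _ ⟨_, _, rfl⟩; exact Real.sqrt_nonneg _⟩ ⟨η, hη, rfl⟩

theorem dist_to_E_estimate_general (K : Set (ℝ × ℝ))
    (hKsub : K ⊆ {p : ℝ × ℝ | 0 < p.1 ∧ p.1 ≤ p.2})
    (E : Set (Matrix (Fin 2) (Fin 2) ℝ)) (hE : E = {ξ | (lam1 ξ, lam2 ξ) ∈ K})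
    (ε : ℝ)
    (U : Set (Matrix (Fin 2) (Fin 2) ℝ))
    (hU : U = {ξ | ∃ p ∈ K, p.1 - 2 * ε < lam1 ξ ∧ lam1 ξ < p.1 - ε ∧
      p.2 - ε < lam2 ξ ∧ lam2 ξ < p.2 - ε / 2}) :
    ∀ ξ ∈ U, distE ξ E ≤ 3 * Real.sqrt 2 * ε := by
  rintro ξ hξ
  rw [hU] at hξ
  obtain ⟨p, hpK, h₁, h₁', h₂, h₂'⟩ := hξ
  obtain ⟨hp₁, hp⟩ := hKsub hpK
  obtain ⟨η, hη₁, hη₂, hdist⟩ := exists_lam_eq_frobSq_sub_eq ξ hp₁.le hp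
  have hηE : η ∈ E := by rw [hE, Set.mem_ofPred_eq, hη₁, hη₂]; exact hpK
  have hε : 0 < ε := by linarith
  have hsqrt2 : Real.sqrt 2 ^ 2 = 2 := Real.sq_sqrt zero_le_two
  calc distE ξ E ≤ frobNorm (ξ - η) := distE_le_frobNorm_sub hηE
    _ ≤ 3 * Real.sqrt 2 * ε := by
      rw [frobNorm, Real.sqrt_le_left (by positivity), hdist, mul_pow, mul_pow, hsqrt2]
      nlinarith

/-- for every `ξ ∈ U_n` one has `dist(ξ, E) ≤ 3√2·ε_n`. -/
theorem dist_to_E_estimate (K : Set (ℝ × ℝ)) (hKc : IsCompact K) (hKne : K.Nonempty)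
    (hKsub : K ⊆ {p : ℝ × ℝ | 0 < p.1 ∧ p.1 ≤ p.2})
    (E : Set (Matrix (Fin 2) (Fin 2) ℝ)) (hE : E = {ξ | (lam1 ξ, lam2 ξ) ∈ K})
    (ε : ℝ) (hεpos : 0 < ε) (hεlt : ε < sInf (Prod.fst '' K) / 2)
    (U : Set (Matrix (Fin 2) (Fin 2) ℝ))
    (hU : U = {ξ | ∃ p ∈ K, p.1 - 2 * ε < lam1 ξ ∧ lam1 ξ < p.1 - ε ∧
      p.2 - ε < lam2 ξ ∧ lam2 ξ < p.2 - ε / 2}) :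
    ∀ ξ ∈ U, distE ξ E ≤ 3 * Real.sqrt 2 * ε :=
  dist_to_E_estimate_general K hKsub E hE ε U hU
end

section
/- Let K ⊂ {(x,y) ∈ ℝ² : 0 < x ≤ y} be compact, let ε_n be a decreasing sequence with 0 < ε_n < a₀/2 (a₀ = min_{(a,b)∈K} a) and ε_n → 0, let 0 < δ_n < ε_n/4, and set K_n := ⋃_{(a,b)∈K} [a − 2ε_n + δ_n, a − ε_n − δ_n] × [b − ε_n + δ_n, b − ε_n/2 − δ_n]. Then max_{(a,b) ∈ K_n} f_θ(a,b) → max_{(a,b) ∈ K} f_θ(a,b) as n → ∞, uniformly with respect to θ ∈ [0, max_{(a,b)∈K} b]. -/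
open scoped BigOperators

/-!
Every point of `K_n` is `(a - u, b - v)` for some `(a, b) ∈ K` with `0 ≤ v ≤ u ≤ 2ε_n`,
`v ≤ ε_n`, and every `(a, b) ∈ K` has such a shift (the corner of its box) in `K_n`. The shift
changes `f_θ` by `u v - u b - v a + θ (u - v)`, which for `0 ≤ a ≤ b ≤ M` and `0 ≤ θ ≤ M` is at
most `ε_n (3M + 2ε_n)` in absolute value. Hence the suprema over `K` and `K_n` differ by at most
this bound, which tends to `0` independently of `θ`.
-/

open Filter Set Topology

theorem TendstoUniformlyOn.of_dist_le_of_tendsto_zero {ι α β : Type*} [PseudoMetricSpace β]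
    {l : Filter ι} {F : ι → α → β} {f : α → β} {s : Set α} {b : ι → ℝ}
    (hb : Tendsto b l (𝓝 0)) (h : ∀ n, ∀ x ∈ s, dist (f x) (F n x) ≤ b n) :
    TendstoUniformlyOn F f l s := by
  rw [Metric.tendstoUniformlyOn_iff]
  intro e he
  filter_upwards [hb.eventually (gt_mem_nhds he)] with n hn x hx
  exact (h n x hx).trans_lt hn

section SupImage

variable {α : Type*} {f : α → ℝ} {S T : Set α} {B : ℝ}

theorem BddAbove.image_of_forall_exists_le_add (hS : BddAbove (f '' S))
    (h : ∀ t ∈ T, ∃ s ∈ S, f t ≤ f s + B) : BddAbove (f '' T) := by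
  obtain ⟨M, hM⟩ := hS
  refine ⟨M + B, forall_mem_image.2 fun t ht ↦ ?_⟩
  obtain ⟨s, hs, hts⟩ := h t ht
  linarith [hM (mem_image_of_mem f hs)]

theorem csSup_image_le_csSup_image_add (hT : T.Nonempty) (hS : BddAbove (f '' S))
    (h : ∀ t ∈ T, ∃ s ∈ S, f t ≤ f s + B) : sSup (f '' T) ≤ sSup (f '' S) + B := by
  refine csSup_le (hT.image f) (forall_mem_image.2 fun t ht ↦ ?_)
  obtain ⟨s, hs, hts⟩ := h t ht
  linarith [le_csSup hS (mem_image_of_mem f hs)]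

theorem abs_csSup_image_sub_csSup_image_le (hS : S.Nonempty) (hT : T.Nonempty)
    (hSb : BddAbove (f '' S)) (hST : ∀ s ∈ S, ∃ t ∈ T, |f t - f s| ≤ B)
    (hTS : ∀ t ∈ T, ∃ s ∈ S, |f t - f s| ≤ B) :
    |sSup (f '' S) - sSup (f '' T)| ≤ B := by
  have hST' : ∀ s ∈ S, ∃ t ∈ T, f s ≤ f t + B := fun s hs ↦ by
    obtain ⟨t, ht, hst⟩ := hST s hs
    exact ⟨t, ht, by linarith [neg_abs_le (f t - f s)]⟩
  have hTS' : ∀ t ∈ T, ∃ s ∈ S, f t ≤ f s + B := fun t ht ↦ by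
    obtain ⟨s, hs, hts⟩ := hTS t ht
    exact ⟨s, hs, by linarith [le_abs_self (f t - f s)]⟩
  have hTb := hSb.image_of_forall_exists_le_add hTS'
  rw [abs_sub_le_iff]
  constructor
  · linarith [csSup_image_le_csSup_image_add hS hTb hST']
  · linarith [csSup_image_le_csSup_image_add hT hSb hTS']

end SupImage

theorem continuous_ftheta (θ : ℝ) : Continuous (ftheta θ) := by
  unfold ftheta
  fun_prop

theorem abs_ftheta_sub_sub_le {θ M a b u v ε : ℝ} (hθ : θ ∈ Icc 0 M) (ha : 0 ≤ a) (hab : a ≤ b)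
    (hbM : b ≤ M) (hu : u ≤ 2 * ε) (hvu : v ≤ u) (hv : 0 ≤ v) (hvε : v ≤ ε) :
    |ftheta θ (a - u, b - v) - ftheta θ (a, b)| ≤ ε * (3 * M + 2 * ε) := by
  obtain ⟨hθ0, hθM⟩ := hθ
  have hdiff : ftheta θ (a - u, b - v) - ftheta θ (a, b) =
      u * v - u * b - v * a + θ * (u - v) := by
    simp only [ftheta]
    ring
  rw [hdiff, abs_le]
  constructor
  · nlinarith [mul_le_mul hu hbM (by linarith) (by linarith),
      mul_le_mul hvε (hab.trans hbM) ha (by linarith), mul_nonneg (hv.trans hvu) hv,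
      mul_nonneg hθ0 (sub_nonneg.2 hvu)]
  · nlinarith [mul_le_mul hu hvε hv (by linarith),
      mul_le_mul hθM hu (by linarith) (hθ0.trans hθM), mul_nonneg hv ha,
      mul_nonneg (hv.trans hvu) (ha.trans hab), mul_nonneg hθ0 hv]

theorem ftheta_max_uniform_convergence_general (K : Set (ℝ × ℝ)) (hKc : IsCompact K) (hKne : K.Nonempty)
    (hKsub : K ⊆ {p : ℝ × ℝ | 0 < p.1 ∧ p.1 ≤ p.2})
    (ε δ : ℕ → ℝ)
    (hε0 : Filter.Tendsto ε Filter.atTop (nhds 0))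
    (hδ : ∀ n, 0 < δ n ∧ δ n < ε n / 4)
    (Kn : ℕ → Set (ℝ × ℝ))
    (hKn : ∀ n, Kn n = ⋃ p ∈ K,
      Set.Icc (p.1 - 2 * ε n + δ n) (p.1 - ε n - δ n) ×ˢ
        Set.Icc (p.2 - ε n + δ n) (p.2 - ε n / 2 - δ n)) :
    TendstoUniformlyOn (fun n θ => sSup (ftheta θ '' Kn n))
      (fun θ => sSup (ftheta θ '' K)) Filter.atTop
      (Set.Icc 0 (sSup (Prod.snd '' K))) := by
  set M := sSup (Prod.snd '' K)
  have hbM : ∀ p ∈ K, p.2 ≤ M := fun p hp ↦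
    le_csSup (hKc.image continuous_snd).bddAbove (mem_image_of_mem _ hp)
  have hB : Tendsto (fun n ↦ ε n * (3 * M + 2 * ε n)) atTop (𝓝 0) := by
    simpa using hε0.mul (tendsto_const_nhds.add (hε0.const_mul 2))
  refine .of_dist_le_of_tendsto_zero hB fun n θ hθ ↦ ?_
  obtain ⟨hδ0, hδε⟩ := hδ n
  have hest : ∀ p ∈ K, ∀ u v, u ≤ 2 * ε n → v ≤ u → 0 ≤ v → v ≤ ε n →
      |ftheta θ (p.1 - u, p.2 - v) - ftheta θ p| ≤ ε n * (3 * M + 2 * ε n) := fun p hp _ _ ↦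
    abs_ftheta_sub_sub_le hθ (hKsub hp).1.le (hKsub hp).2 (hbM p hp)
  have hcorner : ∀ p ∈ K, (p.1 - (ε n + δ n), p.2 - (ε n / 2 + δ n)) ∈ Kn n := fun p hp ↦ by
    rw [hKn n]
    exact mem_iUnion₂.2 ⟨p, hp, ⟨by linarith, by linarith⟩, by linarith, by linarith⟩
  obtain ⟨p₀, hp₀⟩ := hKne
  refine abs_csSup_image_sub_csSup_image_le ⟨p₀, hp₀⟩ ⟨_, hcorner p₀ hp₀⟩
    ((hKc.image (continuous_ftheta θ)).bddAbove)
    (fun p hp ↦ ⟨_, hcorner p hp, hest p hp _ _ (by linarith) (by linarith) (by linarith)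
      (by linarith)⟩) fun q hq ↦ ?_
  rw [hKn n] at hq
  obtain ⟨p, hp, ⟨hx₁, hx₂⟩, hy₁, hy₂⟩ := mem_iUnion₂.1 hq
  refine ⟨p, hp, ?_⟩
  simpa using hest p hp (p.1 - q.1) (p.2 - q.2) (by linarith) (by linarith) (by linarith)
    (by linarith)

/-- uniform convergence of `max_{K_n} f_θ` to `max_K f_θ` for
`θ ∈ [0, max_{(a,b)∈K} b]`. -/
theorem ftheta_max_uniform_convergence (K : Set (ℝ × ℝ)) (hKc : IsCompact K) (hKne : K.Nonempty)
    (hKsub : K ⊆ {p : ℝ × ℝ | 0 < p.1 ∧ p.1 ≤ p.2})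
    (ε δ : ℕ → ℝ) (hεanti : Antitone ε)
    (hεpos : ∀ n, 0 < ε n) (hεlt : ∀ n, ε n < sInf (Prod.fst '' K) / 2)
    (hε0 : Filter.Tendsto ε Filter.atTop (nhds 0))
    (hδ : ∀ n, 0 < δ n ∧ δ n < ε n / 4)
    (Kn : ℕ → Set (ℝ × ℝ))
    (hKn : ∀ n, Kn n = ⋃ p ∈ K,
      Set.Icc (p.1 - 2 * ε n + δ n) (p.1 - ε n - δ n) ×ˢ
        Set.Icc (p.2 - ε n + δ n) (p.2 - ε n / 2 - δ n)) :
    TendstoUniformlyOn (fun n θ => sSup (ftheta θ '' Kn n))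
      (fun θ => sSup (ftheta θ '' K)) Filter.atTop
      (Set.Icc 0 (sSup (Prod.snd '' K))) :=
  ftheta_max_uniform_convergence_general K hKc hKne hKsub ε δ hε0 hδ Kn hKn
end
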